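/- Let θ ∈ (1,2) and let α : ℝ → ℝ satisfy 0 < α(x) for all x and sup_{x∈ℝ} α(x) < 2. Then lim_{x→∞} x^{α(x)−θ} · ∫_{−1}^1 ( (x+y)^{θ} − x^{θ} − θ·x^{θ−1}·y ) · |y|^{−α(x)−1} dy = 0. -/

import Mathlib

open Filter Real MeasureTheory


lemma absRpow_ii01 {r : ℝ} (hr : -1 < r) :
    IntervalIntegrable (fun y : ℝ => |y| ^ r) volume 0 1 := by
  rw [intervalIntegrable_iff] at *
  refine (intervalIntegral.intervalIntegrable_rpow' hr (a := 0) (b := 1)).def'.congr_fun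
    ?_ measurableSet_uIoc
  intro y hy
  rw [Set.uIoc_of_le (by norm_num : (0:ℝ) ≤ 1)] at hy
  simp [abs_of_pos hy.1]

lemma absRpow_ii10 {r : ℝ} (hr : -1 < r) :
    IntervalIntegrable (fun y : ℝ => |y| ^ r) volume (-1) 0 := by
  rw [IntervalIntegrable.iff_comp_neg]
  simpa using (absRpow_ii01 hr).symm

lemma absRpow_ii {r : ℝ} (hr : -1 < r) :
    IntervalIntegrable (fun y : ℝ => |y| ^ r) volume (-1) 1 :=
  (absRpow_ii10 hr).trans (absRpow_ii01 hr)

lemma absRpow_int {r : ℝ} (hr : -1 < r) :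
    ∫ y in (-1:ℝ)..1, |y| ^ r = 2 / (r + 1) := by
  have h01 : ∫ y in (0:ℝ)..1, |y| ^ r = 1 / (r + 1) := by
    rw [intervalIntegral.integral_congr (g := fun y : ℝ => y ^ r) ?_,
      integral_rpow (Or.inl hr)]
    · rw [Real.one_rpow, Real.zero_rpow (by linarith : r + 1 ≠ 0)]; ring
    · intro y hy
      rw [Set.uIcc_of_le (by norm_num : (0:ℝ) ≤ 1)] at hy
      simp [abs_of_nonneg hy.1]
  have hneg : ∫ y in (-1:ℝ)..0, |y| ^ r = ∫ y in (0:ℝ)..1, |y| ^ r := by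
    have := intervalIntegral.integral_comp_neg (a := (0:ℝ)) (b := 1)
      (fun y : ℝ => |y| ^ r)
    simp only [abs_neg, neg_zero, neg_neg] at this
    rw [← this]
  rw [← intervalIntegral.integral_add_adjacent_intervals (absRpow_ii10 hr) (absRpow_ii01 hr),
    hneg, h01]
  ring


lemma lipA (θ : ℝ) (hθ1 : 1 < θ) (hθ2 : θ < 2) {x u : ℝ} (hx : 2 ≤ x) (hu : |u| ≤ 1) :
    |(x + u) ^ (θ - 1) - x ^ (θ - 1)| ≤ (θ - 1) * (x - 1) ^ (θ - 2) * |u| := by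
  have habs := abs_le.mp hu
  have hconv : Convex ℝ (Set.Icc (x - 1) (x + 1)) := convex_Icc _ _
  have hxs : x ∈ Set.Icc (x - 1) (x + 1) := Set.mem_Icc.mpr ⟨by linarith, by linarith⟩
  have hys : x + u ∈ Set.Icc (x - 1) (x + 1) :=
    Set.mem_Icc.mpr ⟨by linarith, by linarith⟩
  have key := hconv.norm_image_sub_le_of_norm_hasDerivWithin_le
    (f := fun t : ℝ => t ^ (θ - 1)) (f' := fun t : ℝ => (θ - 1) * t ^ (θ - 2))
    (C := (θ - 1) * (x - 1) ^ (θ - 2)) ?_ ?_ hxs hys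
  · simpa [Real.norm_eq_abs, add_sub_cancel_left] using key
  · intro t ht
    have ht1 : (1:ℝ) ≤ t := by have := ht.1; linarith
    have h := (Real.hasDerivAt_rpow_const (x := t) (p := θ - 1)
      (Or.inl (by linarith : t ≠ 0)))
    have he : θ - 1 - 1 = θ - 2 := by ring
    rw [he] at h
    exact h.hasDerivWithinAt
  · intro t ht
    have ht1 : (1:ℝ) ≤ t := by have := ht.1; linarith
    have hpos : (0:ℝ) < x - 1 := by linarith
    rw [Real.norm_eq_abs, abs_mul, abs_of_nonneg (by linarith : (0:ℝ) ≤ θ - 1),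
      abs_of_nonneg (Real.rpow_nonneg (by linarith) _)]
    exact mul_le_mul_of_nonneg_left
      (Real.rpow_le_rpow_of_nonpos hpos ht.1 (by linarith)) (by linarith)

lemma taylor_bound (θ : ℝ) (hθ1 : 1 < θ) (hθ2 : θ < 2) {x y : ℝ} (hx : 2 ≤ x) (hy : |y| ≤ 1) :
    |(x + y) ^ θ - x ^ θ - θ * x ^ (θ - 1) * y| ≤
      θ * ((θ - 1) * (x - 1) ^ (θ - 2)) * y ^ 2 := by
  set C : ℝ := (θ - 1) * (x - 1) ^ (θ - 2) with hC
  have hmem : ∀ u ∈ Set.uIcc (0:ℝ) y, |u| ≤ |y| := by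
    intro u hu
    rw [Set.uIcc_eq_union] at hu
    rcases hu with h | h
    · exact abs_le.mpr ⟨by have := h.1; nlinarith [abs_nonneg y, le_abs_self y, neg_abs_le y],
        (h.2.trans (le_abs_self y))⟩
    · exact abs_le.mpr ⟨le_trans (neg_abs_le y) h.1, h.2.trans (by positivity)⟩
  have hder : ∀ u ∈ Set.uIcc (0:ℝ) y,
      HasDerivAt (fun u : ℝ => (x + u) ^ θ - x ^ θ - θ * x ^ (θ - 1) * u)
        (θ * (x + u) ^ (θ - 1) - θ * x ^ (θ - 1)) u := by
    intro u hu
    have hxu : x + u ≠ 0 := by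
      have := (abs_le.mp ((hmem u hu).trans hy)).1; intro h; linarith
    have h1 : HasDerivAt (fun u : ℝ => x + u) 1 u := (hasDerivAt_id u).const_add x
    have h2 := (h1.rpow_const (p := θ) (Or.inl hxu)).sub_const (x ^ θ)
    have h3 := h2.sub ((hasDerivAt_id u).const_mul (θ * x ^ (θ - 1)))
    exact h3.congr_deriv (by ring)
  have hcont0 : Continuous (fun u : ℝ => (x + u) ^ (θ - 1)) :=
    (continuous_const.add continuous_id).rpow_const fun u => Or.inr (by linarith)
  have hcont : Continuous (fun u : ℝ => θ * (x + u) ^ (θ - 1) - θ * x ^ (θ - 1)) :=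
    (continuous_const.mul hcont0).sub continuous_const
  have hint := hcont.intervalIntegrable (μ := volume) 0 y
  have heq := intervalIntegral.integral_eq_sub_of_hasDerivAt hder hint
  simp only [add_zero, mul_zero, sub_zero, sub_self] at heq
  have hbnd : ‖∫ u in (0:ℝ)..y, (θ * (x + u) ^ (θ - 1) - θ * x ^ (θ - 1))‖ ≤
      θ * C * |y| * |y - 0| := by
    apply intervalIntegral.norm_integral_le_of_norm_le_const
    intro u hu
    have hu' : u ∈ Set.uIcc (0:ℝ) y := Set.uIoc_subset_uIcc hu
    have h1 : |u| ≤ |y| := hmem u hu'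
    have h2 := lipA θ hθ1 hθ2 hx (h1.trans hy) (u := u)
    rw [Real.norm_eq_abs]
    calc |θ * (x + u) ^ (θ - 1) - θ * x ^ (θ - 1)|
        = θ * |(x + u) ^ (θ - 1) - x ^ (θ - 1)| := by
          rw [← mul_sub, abs_mul, abs_of_nonneg (by linarith : (0:ℝ) ≤ θ)]
      _ ≤ θ * (C * |u|) := by
          have hθ0' : (0:ℝ) ≤ θ := by linarith
          exact mul_le_mul_of_nonneg_left (by rw [hC]; linarith [h2]) hθ0'
      _ ≤ θ * C * |y| := by
          have hC0 : 0 ≤ C := mul_nonneg (by linarith) (Real.rpow_nonneg (by linarith) _)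
          have hθ0 : (0:ℝ) ≤ θ := by linarith
          exact le_trans
            (mul_le_mul_of_nonneg_left (mul_le_mul_of_nonneg_left h1 hC0) hθ0)
            (le_of_eq (mul_assoc θ C |y|).symm)
  have hre : |(x + y) ^ θ - x ^ θ - θ * x ^ (θ - 1) * y| =
      ‖∫ u in (0:ℝ)..y, (θ * (x + u) ^ (θ - 1) - θ * x ^ (θ - 1))‖ := by
    rw [heq, Real.norm_eq_abs]
  rw [hre]
  calc ‖∫ u in (0:ℝ)..y, (θ * (x + u) ^ (θ - 1) - θ * x ^ (θ - 1))‖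
      ≤ θ * C * |y| * |y - 0| := hbnd
    _ = θ * C * y ^ 2 := by rw [sub_zero, mul_assoc, abs_mul_abs_self, sq]

/-- Equation (3.34): for `θ ∈ (1,2)` and `α` with `0 < α(x)`, `sup α < 2`,
`x^{α(x)−θ} ∫_{−1}^1 ((x+y)^θ − x^θ − θx^{θ−1}y) |y|^{−α(x)−1} dy → 0`
as `x → ∞`. -/
theorem stmt_19 (θ : ℝ) (hθ : θ ∈ Set.Ioo (1:ℝ) 2)
    (α : ℝ → ℝ) (hα : ∀ x, 0 < α x)
    (hsup : ∃ M : ℝ, M < 2 ∧ ∀ x, α x ≤ M) :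
    Tendsto
      (fun x : ℝ => x ^ (α x - θ) *
        ∫ y in (-1:ℝ)..1,
          ((x + y) ^ θ - x ^ θ - θ * x ^ (θ - 1) * y) * |y| ^ (-(α x) - 1))
      atTop (nhds 0) := by
  obtain ⟨hθ1, hθ2⟩ := hθ
  obtain ⟨M, hM2, hMb⟩ := hsup
  have hM0 : 0 < M := lt_of_lt_of_le (hα 0) (hMb 0)
  have hT0 : (0:ℝ) ≤ θ * (θ - 1) := by nlinarith
  set Cst : ℝ := θ * (θ - 1) * 2 * (2 / (2 - M)) with hCst
  have hR'0 : (0:ℝ) ≤ 2 / (2 - M) := div_nonneg (by norm_num) (by linarith)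
  have hCst0 : (0:ℝ) ≤ Cst := by
    rw [hCst]; exact mul_nonneg (mul_nonneg hT0 (by norm_num)) hR'0
  have htend : Tendsto (fun x : ℝ => Cst * x ^ (M - 2)) atTop (nhds 0) := by
    have h := (tendsto_rpow_neg_atTop (show (0:ℝ) < 2 - M by linarith)).const_mul Cst
    rw [mul_zero] at h
    simpa [show -(2 - M) = M - 2 by ring] using h
  apply squeeze_zero_norm' ?_ htend
  filter_upwards [eventually_ge_atTop (2:ℝ)] with x hx2
  set a : ℝ := α x with ha
  have ha0 : 0 < a := hα x
  have haM : a ≤ M := hMb x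
  have hx0 : (0:ℝ) < x := by linarith
  have hx1 : (1:ℝ) ≤ x := by linarith
  have hr : (-1:ℝ) < 1 - a := by linarith
  set K : ℝ := θ * ((θ - 1) * (x - 1) ^ (θ - 2)) with hK
  have hQ0 : (0:ℝ) ≤ (x - 1) ^ (θ - 2) := Real.rpow_nonneg (by linarith) _
  have hK0 : (0:ℝ) ≤ K := by
    rw [hK]; nlinarith
  -- bound on the integral
  have hae : ∀ᵐ t ∂(volume.restrict (Set.uIoc (-1:ℝ) 1)),
      ‖((x + t) ^ θ - x ^ θ - θ * x ^ (θ - 1) * t) * |t| ^ (-a - 1)‖ ≤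
        K * |t| ^ (1 - a) := by
    have h0 : ∀ᵐ t : ℝ ∂(volume.restrict (Set.uIoc (-1:ℝ) 1)), t ≠ 0 := by
      refine ae_restrict_of_ae ?_
      rw [ae_iff]
      have : {t : ℝ | ¬ t ≠ 0} = {0} := by ext t; simp
      rw [this]
      exact Real.volume_singleton
    filter_upwards [h0, ae_restrict_mem measurableSet_uIoc] with t ht0 htm
    rw [Set.uIoc_of_le (by norm_num : (-1:ℝ) ≤ 1)] at htm
    have hty : |t| ≤ 1 := abs_le.mpr ⟨le_of_lt htm.1, htm.2⟩
    have hta : (0:ℝ) < |t| := abs_pos.mpr ht0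
    have hT := taylor_bound θ hθ1 hθ2 hx2 hty
    have hpow : t ^ 2 * |t| ^ (-a - 1) = |t| ^ (1 - a) := by
      rw [← sq_abs, ← Real.rpow_natCast |t| 2, ← Real.rpow_add hta]
      congr 1
      push_cast
      ring
    rw [Real.norm_eq_abs, abs_mul, abs_of_nonneg (Real.rpow_nonneg (abs_nonneg t) _)]
    calc |(x + t) ^ θ - x ^ θ - θ * x ^ (θ - 1) * t| * |t| ^ (-a - 1)
        ≤ (θ * ((θ - 1) * (x - 1) ^ (θ - 2)) * t ^ 2) * |t| ^ (-a - 1) :=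
          mul_le_mul_of_nonneg_right hT (Real.rpow_nonneg (abs_nonneg t) _)
      _ = K * (t ^ 2 * |t| ^ (-a - 1)) := by rw [hK]; ring
      _ = K * |t| ^ (1 - a) := by rw [hpow]
  have hIb : ‖∫ y in (-1:ℝ)..1,
      ((x + y) ^ θ - x ^ θ - θ * x ^ (θ - 1) * y) * |y| ^ (-a - 1)‖ ≤
      K * (2 / (2 - a)) := by
    have hgi : IntervalIntegrable (fun y : ℝ => K * |y| ^ (1 - a)) volume (-1) 1 :=
      (absRpow_ii hr).const_mul K
    have h := intervalIntegral.norm_integral_le_abs_of_norm_le hae hgi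
    have hval : ∫ y in (-1:ℝ)..1, K * |y| ^ (1 - a) = K * (2 / (2 - a)) := by
      rw [intervalIntegral.integral_const_mul, absRpow_int hr,
        show (1 - a) + 1 = 2 - a by ring]
    rw [hval] at h
    refine h.trans (le_of_eq (abs_of_nonneg ?_))
    exact mul_nonneg hK0 (div_nonneg (by norm_num) (by linarith))
  -- assemble
  have hP0 : (0:ℝ) ≤ x ^ (a - θ) := Real.rpow_nonneg (by linarith) _
  have hQ : (x - 1) ^ (θ - 2) ≤ 2 * x ^ (θ - 2) := by
    have hdiv : x / 2 ≤ x - 1 := by linarith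
    have h1 := Real.rpow_le_rpow_of_nonpos (by linarith : (0:ℝ) < x / 2) hdiv
      (by linarith : θ - 2 ≤ 0)
    have h2 : (x / 2) ^ (θ - 2) = x ^ (θ - 2) * (2:ℝ) ^ (2 - θ) := by
      rw [Real.div_rpow (by linarith) (by norm_num),
        show (2:ℝ) - θ = -(θ - 2) by ring, Real.rpow_neg (by norm_num), div_eq_mul_inv]
    have h3 : (2:ℝ) ^ (2 - θ) ≤ 2 := by
      calc (2:ℝ) ^ (2 - θ) ≤ (2:ℝ) ^ (1:ℝ) :=
            Real.rpow_le_rpow_of_exponent_le (by norm_num) (by linarith)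
        _ = 2 := Real.rpow_one 2
    have hxp : (0:ℝ) ≤ x ^ (θ - 2) := Real.rpow_nonneg (by linarith) _
    calc (x - 1) ^ (θ - 2) ≤ (x / 2) ^ (θ - 2) := h1
      _ = x ^ (θ - 2) * (2:ℝ) ^ (2 - θ) := h2
      _ ≤ x ^ (θ - 2) * 2 := mul_le_mul_of_nonneg_left h3 hxp
      _ = 2 * x ^ (θ - 2) := by ring
  have hRle : 2 / (2 - a) ≤ 2 / (2 - M) := by
    apply div_le_div_of_nonneg_left (by norm_num) (by linarith) (by linarith)
  have hR0 : (0:ℝ) ≤ 2 / (2 - a) := div_nonneg (by norm_num) (by linarith)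
  have hxp : (0:ℝ) ≤ x ^ (θ - 2) := Real.rpow_nonneg (by linarith) _
  have hexp : x ^ (a - θ) * x ^ (θ - 2) = x ^ (a - 2) := by
    rw [← Real.rpow_add hx0]
    congr 1
    ring
  have hfin : x ^ (a - 2) ≤ x ^ (M - 2) :=
    Real.rpow_le_rpow_of_exponent_le hx1 (by linarith)
  rw [Real.norm_eq_abs, abs_mul, abs_of_nonneg hP0]
  calc x ^ (a - θ) * |∫ y in (-1:ℝ)..1,
        ((x + y) ^ θ - x ^ θ - θ * x ^ (θ - 1) * y) * |y| ^ (-a - 1)|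
      ≤ x ^ (a - θ) * (K * (2 / (2 - a))) :=
        mul_le_mul_of_nonneg_left hIb hP0
    _ = θ * (θ - 1) * ((x - 1) ^ (θ - 2) * (2 / (2 - a))) * x ^ (a - θ) := by
        rw [hK]; ring
    _ ≤ θ * (θ - 1) * ((2 * x ^ (θ - 2)) * (2 / (2 - M))) * x ^ (a - θ) := by
        apply mul_le_mul_of_nonneg_right _ hP0
        apply mul_le_mul_of_nonneg_left _ hT0
        exact mul_le_mul hQ hRle hR0 (mul_nonneg (by norm_num) hxp)
    _ = Cst * (x ^ (a - θ) * x ^ (θ - 2)) := by rw [hCst]; ring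
    _ = Cst * x ^ (a - 2) := by rw [hexp]
    _ ≤ Cst * x ^ (M - 2) := mul_le_mul_of_nonneg_left hfin hCst0
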